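/- For n ≥ 2 let F_n : ℝ → ℝ be the 1-periodic extension of f_n (i.e. F_n(ξ) = f_n(ξ − ⌊ξ⌋) for ξ with ξ − ⌊ξ⌋ ∈ (0,1)), and for t ≥ 0 define y_n(t) ∈ L²(0,1) by y_n(t)(ξ) := φ_{F_n(ξ + t)}(t), which is the solution of the saturated transport equation ẏ(t,ξ) = ∂_ξ y(t,ξ) − sat_ℝ(y(t,ξ)) with periodic boundary conditions and initial datum f_n. Then for every t ≥ 0 and every n ≥ 2, ‖y_n(t)‖_{L²(0,1)} = ‖x_n(t)‖_{L²(0,1)}, where x_n(t)(ξ) = φ_{f_n(ξ)}(t); consequently, for every fixed t ≥ 0, liminf_{n→∞} ‖y_n(t)‖²_{L²(0,1)} ≥ 1, while ‖y_n(0)‖_{L²(0,1)} = 1. -/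

import Mathlib

open MeasureTheory

/-- The scalar saturation function `sat_ℝ(z) = max (-1) (min 1 z)`. -/
noncomputable def satR (z : ℝ) : ℝ := max (-1) (min 1 z)

/-- The explicit solution `φ_a` of the scalar ODE `ẏ = −sat_ℝ(y)`, `y(0) = a`. -/
noncomputable def phi (a t : ℝ) : ℝ :=
  if 1 + t ≤ a then a - t
  else if -1 < a ∧ a < 1 then Real.exp (-t) * a
  else if a ≤ -1 - t then a + t
  else if 1 ≤ a then Real.exp (a - 1 - t)
  else -Real.exp (1 - t - a)

/-- `α_n = (1/2)(1 − 1/n)`. -/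
noncomputable def alphaN (n : ℕ) : ℝ := (1 / 2) * (1 - 1 / (n : ℝ))

/-- `f_n(ξ) = n^{−1/2} ξ^{−α_n}`. -/
noncomputable def fn (n : ℕ) (ξ : ℝ) : ℝ := (n : ℝ) ^ (-(1 : ℝ) / 2) * ξ ^ (-alphaN n)

/-- `F_n`: the 1-periodic extension of `f_n` to `ℝ`, `F_n(ξ) = f_n(ξ − ⌊ξ⌋)`. -/
noncomputable def Fn (n : ℕ) (ξ : ℝ) : ℝ := fn n (Int.fract ξ)

/-! ### Auxiliary lemmas on `phi` -/

lemma phi_zero (a : ℝ) : phi a 0 = a := by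
  unfold phi
  split_ifs with h1 h2 h3 h4
  · ring
  · simp
  · ring
  · push_neg at h1; linarith
  · push_neg at h2 h4
    linarith [h2 (by linarith)]

lemma phi_sq_ge {a t : ℝ} (ha : 0 < a) (ht : 0 ≤ t) :
    a ^ 2 - (1 + 3 * t) * a ≤ (phi a t) ^ 2 := by
  unfold phi
  split_ifs with h1 h2 h3 h4
  · nlinarith
  · nlinarith [sq_nonneg (Real.exp (-t) * a), h2.2]
  · linarith
  · push_neg at h1
    nlinarith [sq_nonneg (Real.exp (a - 1 - t))]
  · push_neg at h2
    have := h2 (by linarith)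
    push_neg at h4
    linarith

lemma phi_sq_le {a t : ℝ} (ha : 0 < a) (ht : 0 ≤ t) :
    (phi a t) ^ 2 ≤ (a + 1) ^ 2 := by
  unfold phi
  split_ifs with h1 h2 h3 h4
  · nlinarith
  · have h0 : Real.exp (-t) ≤ 1 := Real.exp_le_one_iff.mpr (by linarith)
    have h0' : 0 < Real.exp (-t) := Real.exp_pos _
    have e1 : Real.exp (-t) * a ≤ a := by nlinarith
    have e2 : 0 ≤ Real.exp (-t) * a := by positivity
    nlinarith
  · linarith
  · push_neg at h1
    have : Real.exp (a - 1 - t) ≤ 1 := Real.exp_le_one_iff.mpr (by linarith)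
    have h0' : 0 < Real.exp (a - 1 - t) := Real.exp_pos _
    nlinarith
  · push_neg at h2
    have := h2 (by linarith)
    push_neg at h4
    linarith

lemma measurable_phi (t : ℝ) : Measurable (fun a => phi a t) := by
  unfold phi
  apply Measurable.ite (measurableSet_le measurable_const measurable_id)
  · fun_prop
  apply Measurable.ite
  · exact (measurableSet_lt measurable_const measurable_id).inter
      (measurableSet_lt measurable_id measurable_const)
  · fun_prop
  apply Measurable.ite (measurableSet_le measurable_id measurable_const)
  · fun_prop
  apply Measurable.ite (measurableSet_le measurable_const measurable_id) <;> fun_prop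

/-! ### Auxiliary lemmas on `fn` and its integrals -/

lemma integrableOn_rpow {r : ℝ} (hr : -1 < r) :
    IntegrableOn (fun ξ : ℝ => ξ ^ r) (Set.Ioo 0 1) := by
  have h := intervalIntegral.intervalIntegrable_rpow' (a := 0) (b := 1) hr
  rw [intervalIntegrable_iff_integrableOn_Ioc_of_le zero_le_one] at h
  exact h.mono_set Set.Ioo_subset_Ioc_self

lemma int_rpow {r : ℝ} (hr : -1 < r) :
    ∫ ξ in Set.Ioo (0:ℝ) 1, ξ ^ r = 1 / (r + 1) := by
  rw [← integral_Ioc_eq_integral_Ioo, ← intervalIntegral.integral_of_le zero_le_one,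
    integral_rpow (Or.inl hr), Real.one_rpow, Real.zero_rpow (by linarith)]
  ring

lemma nRpos {n : ℕ} (hn : 2 ≤ n) : 0 < (n:ℝ) := by
  have : (2:ℝ) ≤ (n:ℝ) := by exact_mod_cast hn
  linarith

lemma alphaN_mem {n : ℕ} (hn : 2 ≤ n) : 0 < alphaN n ∧ alphaN n < 1 / 2 := by
  have h2 : (2:ℝ) ≤ (n:ℝ) := by exact_mod_cast hn
  have h1 : 0 < 1 / (n:ℝ) := by positivity
  have h3 : 1 / (n:ℝ) ≤ 1 / 2 := by
    apply one_div_le_one_div_of_le <;> linarith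
  constructor <;> (unfold alphaN; nlinarith)

lemma fn_pos {n : ℕ} (hn : 2 ≤ n) {ξ : ℝ} (hξ : 0 < ξ) : 0 < fn n ξ := by
  have := nRpos hn
  unfold fn
  positivity

lemma rpow_sq (x : ℝ) (hx : 0 ≤ x) (e : ℝ) : (x ^ e) ^ 2 = x ^ (e * 2) := by
  rw [← Real.rpow_natCast (x ^ e) 2, ← Real.rpow_mul hx]
  norm_num

lemma fn_sq_eq {n : ℕ} (hn : 2 ≤ n) {ξ : ℝ} (hξ : 0 < ξ) :
    (fn n ξ) ^ 2 = (n:ℝ)⁻¹ * ξ ^ (1 / (n:ℝ) - 1) := by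
  have hnn := (nRpos hn).le
  unfold fn
  rw [mul_pow, rpow_sq _ hnn, rpow_sq _ hξ.le]
  have h1 : (-(1:ℝ)/2) * 2 = -1 := by ring
  have h2 : -alphaN n * 2 = 1 / (n:ℝ) - 1 := by unfold alphaN; ring
  rw [h1, h2, Real.rpow_neg_one]

lemma hr2 {n : ℕ} (hn : 2 ≤ n) : (-1 : ℝ) < 1 / (n:ℝ) - 1 := by
  have : 0 < 1 / (n:ℝ) := by have := nRpos hn; positivity
  linarith

lemma hr1 {n : ℕ} (hn : 2 ≤ n) : (-1 : ℝ) < -alphaN n := by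
  have := alphaN_mem hn; linarith [this.1, this.2]

lemma integrableOn_fn {n : ℕ} (hn : 2 ≤ n) : IntegrableOn (fn n) (Set.Ioo 0 1) :=
  ((integrableOn_rpow (hr1 hn)).const_mul _)

lemma integrableOn_fn_sq {n : ℕ} (hn : 2 ≤ n) :
    IntegrableOn (fun ξ => (fn n ξ) ^ 2) (Set.Ioo 0 1) := by
  apply IntegrableOn.congr_fun ((integrableOn_rpow (hr2 hn)).const_mul ((n:ℝ)⁻¹))
    (fun ξ hξ => (fn_sq_eq hn hξ.1).symm) measurableSet_Ioo

lemma int_fn_sq {n : ℕ} (hn : 2 ≤ n) : ∫ ξ in Set.Ioo (0:ℝ) 1, (fn n ξ) ^ 2 = 1 := by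
  rw [setIntegral_congr_fun measurableSet_Ioo (fun ξ hξ => fn_sq_eq hn hξ.1),
    integral_const_mul, int_rpow (hr2 hn)]
  have h0 : (n:ℝ) ≠ 0 := (nRpos hn).ne'
  field_simp
  ring

noncomputable def cn (n : ℕ) : ℝ := (n:ℝ) ^ (-(1:ℝ)/2) * (1 / (-alphaN n + 1))

lemma int_fn {n : ℕ} (hn : 2 ≤ n) : ∫ ξ in Set.Ioo (0:ℝ) 1, fn n ξ = cn n := by
  unfold fn cn
  rw [integral_const_mul, int_rpow (hr1 hn)]

lemma cn_nonneg {n : ℕ} (hn : 2 ≤ n) : 0 ≤ cn n := by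
  have h := alphaN_mem hn
  have := nRpos hn
  unfold cn
  have : (0:ℝ) < -alphaN n + 1 := by linarith [h.2]
  positivity

lemma cn_le {n : ℕ} (hn : 2 ≤ n) : cn n ≤ 2 * (n:ℝ) ^ (-(1:ℝ)/2) := by
  have h := alphaN_mem hn
  have hp : (0:ℝ) < (n:ℝ) ^ (-(1:ℝ)/2) := Real.rpow_pos_of_pos (nRpos hn) _
  have h1 : 1 / (-alphaN n + 1) ≤ 2 := by
    rw [div_le_iff₀ (by linarith [h.2])]
    linarith [h.1]
  unfold cn
  nlinarith

/-! ### Periodicity and the shift identity -/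

lemma Fn_periodic (n : ℕ) : Function.Periodic (Fn n) 1 := fun ξ => by
  unfold Fn; rw [Int.fract_add_one]

lemma shift_eq (n : ℕ) (t : ℝ) :
    ∫ ξ in Set.Ioo (0:ℝ) 1, (phi (Fn n (ξ + t)) t) ^ 2 =
      ∫ ξ in Set.Ioo (0:ℝ) 1, (phi (fn n ξ) t) ^ 2 := by
  have hper : Function.Periodic (fun ξ => (phi (Fn n ξ) t) ^ 2) 1 := fun ξ => by
    simp [Fn_periodic n ξ]
  have h1 : ∫ ξ in Set.Ioo (0:ℝ) 1, (phi (Fn n (ξ + t)) t) ^ 2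
      = ∫ ξ in (0:ℝ)..1, (phi (Fn n (ξ + t)) t) ^ 2 := by
    rw [intervalIntegral.integral_of_le zero_le_one, integral_Ioc_eq_integral_Ioo]
  rw [h1, intervalIntegral.integral_comp_add_right (fun ξ => (phi (Fn n ξ) t) ^ 2) t]
  rw [show (0:ℝ)+t = t by ring, show (1:ℝ)+t = t+1 by ring, hper.intervalIntegral_add_eq t 0]
  rw [zero_add, intervalIntegral.integral_of_le zero_le_one, integral_Ioc_eq_integral_Ioo]
  apply setIntegral_congr_fun measurableSet_Ioo
  intro ξ hξ
  simp [Fn, Int.fract_eq_self.mpr ⟨hξ.1.le, hξ.2⟩]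

/-! ### Integrability and bounds for the solution -/

lemma integrableOn_phi_sq {n : ℕ} {t : ℝ} (hn : 2 ≤ n) (ht : 0 ≤ t) :
    IntegrableOn (fun ξ => (phi (fn n ξ) t) ^ 2) (Set.Ioo 0 1) := by
  have hmeas : Measurable (fun ξ : ℝ => (phi (fn n ξ) t) ^ 2) := by
    have h2 : Measurable (fn n) := by unfold fn; fun_prop
    exact ((measurable_phi t).comp h2).pow_const 2
  have hbound : IntegrableOn (fun ξ => (fn n ξ + 1) ^ 2) (Set.Ioo 0 1) := by
    have he : (fun ξ => (fn n ξ + 1) ^ 2)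
        = fun ξ => ((fn n ξ) ^ 2 + 2 * fn n ξ) + 1 := by
      funext ξ; ring
    rw [he]
    exact ((integrableOn_fn_sq hn).add ((integrableOn_fn hn).const_mul 2)).add
      ((integrableOn_const_iff).mpr (Or.inr measure_Ioo_lt_top))
  apply Integrable.mono' hbound hmeas.aestronglyMeasurable
  filter_upwards [ae_restrict_mem measurableSet_Ioo] with ξ hξ
  rw [Real.norm_eq_abs, abs_of_nonneg (sq_nonneg _)]
  exact phi_sq_le (fn_pos hn hξ.1) ht

lemma I_lb {n : ℕ} {t : ℝ} (hn : 2 ≤ n) (ht : 0 ≤ t) :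
    1 - (1 + 3 * t) * cn n ≤ ∫ ξ in Set.Ioo (0:ℝ) 1, (phi (fn n ξ) t) ^ 2 := by
  have hA : IntegrableOn (fun ξ => (phi (fn n ξ) t) ^ 2 + (1 + 3 * t) * fn n ξ)
      (Set.Ioo 0 1) := (integrableOn_phi_sq hn ht).add ((integrableOn_fn hn).const_mul _)
  have key : ∫ ξ in Set.Ioo (0:ℝ) 1, (fn n ξ) ^ 2
      ≤ ∫ ξ in Set.Ioo (0:ℝ) 1, ((phi (fn n ξ) t) ^ 2 + (1 + 3 * t) * fn n ξ) := by
    apply setIntegral_mono_on (integrableOn_fn_sq hn) hA measurableSet_Ioo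
    intro ξ hξ
    have := phi_sq_ge (fn_pos hn hξ.1) ht
    linarith
  rw [int_fn_sq hn, integral_add (integrableOn_phi_sq hn ht)
    ((integrableOn_fn hn).const_mul _), integral_const_mul, int_fn hn] at key
  linarith

lemma I_ub {n : ℕ} {t : ℝ} (hn : 2 ≤ n) (ht : 0 ≤ t) :
    ∫ ξ in Set.Ioo (0:ℝ) 1, (phi (fn n ξ) t) ^ 2 ≤ 2 + 2 * cn n := by
  have hB : IntegrableOn (fun ξ => (fn n ξ) ^ 2 + 2 * fn n ξ) (Set.Ioo 0 1) :=
    (integrableOn_fn_sq hn).add ((integrableOn_fn hn).const_mul 2)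
  have hC : IntegrableOn (fun _ξ : ℝ => (1:ℝ)) (Set.Ioo 0 1) :=
    (integrableOn_const_iff).mpr (Or.inr measure_Ioo_lt_top)
  have key : ∫ ξ in Set.Ioo (0:ℝ) 1, (phi (fn n ξ) t) ^ 2
      ≤ ∫ ξ in Set.Ioo (0:ℝ) 1, (((fn n ξ) ^ 2 + 2 * fn n ξ) + 1) := by
    apply setIntegral_mono_on (integrableOn_phi_sq hn ht) (hB.add hC) measurableSet_Ioo
    intro ξ hξ
    have := phi_sq_le (fn_pos hn hξ.1) ht
    show phi (fn n ξ) t ^ 2 ≤ (fn n ξ) ^ 2 + 2 * fn n ξ + 1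
    nlinarith [fn_pos hn hξ.1]
  rw [integral_add hB hC,
    integral_add (integrableOn_fn_sq hn) ((integrableOn_fn hn).const_mul 2),
    integral_const_mul, int_fn hn, int_fn_sq hn] at key
  have hvol : ∫ _ξ in Set.Ioo (0:ℝ) 1, (1:ℝ) = 1 := by
    simp [Real.volume_Ioo]
  rw [hvol] at key
  linarith

lemma cn_tendsto : Filter.Tendsto cn Filter.atTop (nhds 0) := by
  have hg : Filter.Tendsto (fun n : ℕ => 2 * (n:ℝ) ^ (-(1:ℝ)/2)) Filter.atTop (nhds 0) := by
    have h0 : Filter.Tendsto (fun x : ℝ => x ^ (-((1:ℝ)/2))) Filter.atTop (nhds 0) :=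
      tendsto_rpow_neg_atTop (by norm_num)
    have h1 : Filter.Tendsto (fun n : ℕ => ((n:ℝ)) ^ (-((1:ℝ)/2))) Filter.atTop (nhds 0) :=
      h0.comp tendsto_natCast_atTop_atTop
    have := h1.const_mul (2:ℝ)
    simpa [neg_div] using this
  apply tendsto_of_tendsto_of_tendsto_of_le_of_le' tendsto_const_nhds hg
  · filter_upwards [Filter.eventually_ge_atTop 2] with n hn using cn_nonneg hn
  · filter_upwards [Filter.eventually_ge_atTop 2] with n hn using cn_le hn

/-! ### Main theorem -/

/-- With `y_n(t)(ξ) := φ_{F_n(ξ+t)}(t)` (the solution of the saturated transport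
equation with periodic boundary conditions and initial datum `f_n`) and
`x_n(t)(ξ) := φ_{f_n(ξ)}(t)`: `‖y_n(t)‖_{L²} = ‖x_n(t)‖_{L²}` for all `t ≥ 0`, `n ≥ 2`;
consequently `liminf_{n→∞} ‖y_n(t)‖²_{L²} ≥ 1` for each fixed `t ≥ 0`,
while `‖y_n(0)‖_{L²} = 1`. -/
theorem stmt_16 :
    (∀ n : ℕ, 2 ≤ n → ∀ t : ℝ, 0 ≤ t →
      Real.sqrt (∫ ξ in Set.Ioo (0:ℝ) 1, (phi (Fn n (ξ + t)) t) ^ 2) =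
        Real.sqrt (∫ ξ in Set.Ioo (0:ℝ) 1, (phi (fn n ξ) t) ^ 2)) ∧
    (∀ t : ℝ, 0 ≤ t →
      1 ≤ Filter.liminf
        (fun n : ℕ => ∫ ξ in Set.Ioo (0:ℝ) 1, (phi (Fn n (ξ + t)) t) ^ 2)
        Filter.atTop) ∧
    (∀ n : ℕ, 2 ≤ n →
      Real.sqrt (∫ ξ in Set.Ioo (0:ℝ) 1, (phi (Fn n (ξ + 0)) 0) ^ 2) = 1) := by
  refine ⟨fun n hn t ht => by rw [shift_eq], fun t ht => ?_, fun n hn => ?_⟩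
  · -- liminf part
    have hb_tendsto : Filter.Tendsto (fun n : ℕ => 1 - (1 + 3 * t) * cn n)
        Filter.atTop (nhds 1) := by
      have := (cn_tendsto.const_mul (1 + 3 * t)).const_sub 1
      simpa using this
    have hbu : ∀ᶠ n in Filter.atTop,
        (fun n : ℕ => 1 - (1 + 3 * t) * cn n) n ≤
        (fun n : ℕ => ∫ ξ in Set.Ioo (0:ℝ) 1, (phi (Fn n (ξ + t)) t) ^ 2) n := by
      filter_upwards [Filter.eventually_ge_atTop 2] with n hn
      show 1 - (1 + 3 * t) * cn n ≤ ∫ ξ in Set.Ioo (0:ℝ) 1, (phi (Fn n (ξ + t)) t) ^ 2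
      rw [shift_eq]
      exact I_lb hn ht
    have hub : ∀ᶠ n in Filter.atTop,
        (fun n : ℕ => ∫ ξ in Set.Ioo (0:ℝ) 1, (phi (Fn n (ξ + t)) t) ^ 2) n ≤ 6 := by
      filter_upwards [Filter.eventually_ge_atTop 2] with n hn
      have h1 := I_ub (t := t) hn ht
      have h2 := cn_le hn
      have h3 : (n:ℝ) ^ (-(1:ℝ)/2) ≤ 1 := by
        apply Real.rpow_le_one_of_one_le_of_nonpos
        · exact_mod_cast (by omega : 1 ≤ n)
        · norm_num
      show (∫ ξ in Set.Ioo (0:ℝ) 1, (phi (Fn n (ξ + t)) t) ^ 2) ≤ 6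
      rw [shift_eq]
      linarith
    have hmono := Filter.liminf_le_liminf hbu hb_tendsto.isBoundedUnder_ge
      (Filter.isCoboundedUnder_ge_of_eventually_le _ hub)
    rw [hb_tendsto.liminf_eq] at hmono
    exact hmono
  · -- t = 0 part
    rw [shift_eq n 0,
      setIntegral_congr_fun (g := fun ξ => (fn n ξ) ^ 2) measurableSet_Ioo
        (fun ξ _hξ => by rw [phi_zero]),
      int_fn_sq hn, Real.sqrt_one]
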